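/- arXiv:2011.07621 — 2 statements merged into one kernel-verified Lean document; each statement's English description precedes it below -/
import Mathlib

section
/- Let t, t' ∈ B_n be distinct bracketings of size n, and let G be a digraph whose graph algebra A(G) satisfies the bracketing identity t ≈ t'. Then there is no path in G from a vertex of a nontrivial strongly connected component of G to a vertex of a different nontrivial strongly connected component. -/
namespace AssocSpec

/-- Bracketings of products `x₁ x₂ ⋯ xₙ` represented as binary trees whose
leaves, read from left to right, are the variables `x₁, …, xₙ`. -/
inductive BTree : Type
  | leaf : BTree
  | node : BTree → BTree → BTree

namespace BTree

/-- The size of a bracketing: its number of variables (leaves). -/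
def size : BTree → ℕ
  | leaf => 1
  | node l r => l.size + r.size

/-- Evaluate a bracketing in a magma `(A, op)`, the leaves taking the values
`f k, f (k+1), …` from left to right. -/
def evalFrom {A : Type*} (op : A → A → A) : BTree → (ℕ → A) → ℕ → A
  | leaf, f, k => f k
  | node l r, f, k => op (evalFrom op l f k) (evalFrom op r f (k + l.size))

/-- The term operation induced by a bracketing `t` on a magma `(A, op)`;
the `i`-th variable (0-indexed) takes the value `f i`. -/
def termOp {A : Type*} (op : A → A → A) (t : BTree) (f : ℕ → A) : A :=
  evalFrom op t f 0

/-- The depth sequence of the DFS tree `G(t)` of a bracketing `t`: the `i`-th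
entry is the depth of the `i`-th variable (0-indexed) in `G(t)`. -/
def depths : BTree → List ℕ
  | leaf => [0]
  | node l r => l.depths ++ r.depths.map (· + 1)

/-- The depth of the `i`-th variable (0-indexed) in the DFS tree `G(t)`. -/
def depth (t : BTree) (i : ℕ) : ℕ := t.depths.getD i 0

/-- The height of the DFS tree `G(t)`: the maximum depth of a variable. -/
def height (t : BTree) : ℕ := t.depths.foldr max 0

/-- The edges of the DFS tree `G(t)`, the variables being indexed from the
given offset: `(p, c)` is an edge iff `x_p` is the parent of `x_c`. -/
def edgesFrom : BTree → ℕ → List (ℕ × ℕ)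
  | leaf, _ => []
  | node l r, k => (k, k + l.size) :: (l.edgesFrom k ++ r.edgesFrom (k + l.size))

/-- The edges of the DFS tree `G(t)` (variables indexed from `0`). -/
def edges (t : BTree) : List (ℕ × ℕ) := t.edgesFrom 0

end BTree

open Classical in
/-- The operation of the graph algebra of the digraph with vertex set `V` and
edge relation `E`; `none` plays the role of `∞`. -/
noncomputable def gaOp {V : Type*} (E : V → V → Prop) :
    Option V → Option V → Option V
  | some x, some y => if E x y then some x else none
  | _, _ => none

/-- The magma `(A, op)` satisfies the bracketing identity `t ≈ t'`. -/
def Satisfies {A : Type*} (op : A → A → A) (t t' : BTree) : Prop :=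
  ∀ f : ℕ → A, BTree.termOp op t f = BTree.termOp op t' f

/-- The `n`-th member `s_n` of the associative spectrum of the magma `(A, op)`:
the number of distinct term operations induced by bracketings of size `n`. -/
noncomputable def spectrum {A : Type*} (op : A → A → A) (n : ℕ) : ℕ :=
  Set.ncard {g : (ℕ → A) → A | ∃ t : BTree, t.size = n ∧ g = BTree.termOp op t}

/-- Reachability (by a walk) in the digraph with edge relation `E`. -/
def Reach {V : Type*} (E : V → V → Prop) : V → V → Prop :=
  Relation.ReflTransGen E

/-- `u` and `v` lie in the same strongly connected component. -/
def SameSCC {V : Type*} (E : V → V → Prop) (u v : V) : Prop :=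
  Reach E u v ∧ Reach E v u

/-- The strongly connected component of `v`, as a set of vertices. -/
def scc {V : Type*} (E : V → V → Prop) (v : V) : Set V :=
  {u | SameSCC E u v}

/-- `v` lies in a nontrivial strongly connected component (one carrying at
least one edge), i.e. `v` lies on a closed walk of positive length. -/
def InNontrivialSCC {V : Type*} (E : V → V → Prop) (v : V) : Prop :=
  ∃ u, E v u ∧ Reach E u v

/-- The induced subgraph on the set `K` (with the edge relation `E`) is an
`m`-whirl: `K` is partitioned into blocks `B 0, …, B (m-1)` so that edges go
exactly from each block to the cyclically next one. -/
def IsWhirlOn {V : Type*} (E : V → V → Prop) (K : Set V) (m : ℕ) : Prop :=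
  ∃ B : ZMod m → Set V,
    (∀ i, (B i).Nonempty) ∧
    (∀ i, B i ⊆ K) ∧
    (∀ x ∈ K, ∃! i, x ∈ B i) ∧
    (∀ x ∈ K, ∀ y ∈ K, (E x y ↔ ∃ i, x ∈ B i ∧ y ∈ B (i + 1)))

/-- `p 0 → p 1 → ⋯ → p len` is a path (a walk with pairwise distinct
vertices) in the digraph with edge relation `E`. -/
def IsPath {V : Type*} (E : V → V → Prop) (len : ℕ) (p : ℕ → V) : Prop :=
  (∀ i < len, E (p i) (p (i + 1))) ∧
  (∀ i ≤ len, ∀ j ≤ len, p i = p j → i = j)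

/-- The walk `p 0 → ⋯ → p len` is pleasant: all its vertices belong to
trivial strongly connected components. -/
def IsPleasant {V : Type*} (E : V → V → Prop) (len : ℕ) (p : ℕ → V) : Prop :=
  ∀ i ≤ len, ¬ InNontrivialSCC E (p i)

/-- The connected component `K` (of an undirected graph) is complete
bipartite: it splits into two nonempty parts with edges exactly between
vertices of different parts. -/
def IsCompleteBipartiteOn {V : Type*} (E : V → V → Prop) (K : Set V) : Prop :=
  ∃ B1 B2 : Set V, B1.Nonempty ∧ B2.Nonempty ∧ B1 ∪ B2 = K ∧ B1 ∩ B2 = ∅ ∧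
    ∀ x ∈ K, ∀ y ∈ K, (E x y ↔ (x ∈ B1 ∧ y ∈ B2) ∨ (x ∈ B2 ∧ y ∈ B1))

/-- A DFS tree of size `n`: a rooted directed tree on the vertices
`x₁, …, xₙ` (here `Fin n`, the root being `0`), given by its parent function,
such that the parent of every non-root vertex precedes it and the vertex set
of the induced subtree rooted at any vertex `i` is an interval `[i, i']`.
(The parent of the root is, by convention, the root itself.) -/
structure DFSTree (n : ℕ) where
  parent : Fin n → Fin n
  parent_lt : ∀ i : Fin n, 0 < (i : ℕ) → (parent i : ℕ) < (i : ℕ)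
  parent_root : ∀ i : Fin n, (i : ℕ) = 0 → parent i = i
  interval : ∀ i j k : Fin n, i ≤ j → j ≤ k →
    (∃ a : ℕ, parent^[a] k = i) → (∃ a : ℕ, parent^[a] j = i)

/-- The depth of the vertex `i` in a DFS tree: the length of the path from
the root to `i`. -/
noncomputable def DFSTree.depth {n : ℕ} (T : DFSTree n) (i : Fin n) : ℕ :=
  sInf {k : ℕ | (T.parent^[k] i : ℕ) = 0}

/-- The height of a DFS tree: the maximum depth of a vertex. -/
noncomputable def DFSTree.height {n : ℕ} (T : DFSTree n) : ℕ :=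
  Finset.univ.sup fun i => T.depth i

/-- The vertex `i` is a leaf (childless vertex) of the DFS tree `T`. -/
def DFSTree.IsLeaf {n : ℕ} (T : DFSTree n) (i : Fin n) : Prop :=
  ∀ j : Fin n, T.parent j = i → j = i

/-- `t_h(n)`: the number of DFS trees of size `n` of height at most `h`. -/
noncomputable def tcount (h n : ℕ) : ℕ :=
  Nat.card {T : DFSTree n // T.height ≤ h}

/-- `d` is a zag sequence: `d₁ = 0`, `d₂ = 1`, and
`1 ≤ d_{i+1} ≤ d_i + 1` for all `i` (1-indexed as in the paper;
here `d : Fin n → ℕ` is 0-indexed). -/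
def IsZag {n : ℕ} (d : Fin n → ℕ) : Prop :=
  (∀ h : 0 < n, d ⟨0, h⟩ = 0) ∧
  (∀ h : 1 < n, d ⟨1, h⟩ = 1) ∧
  (∀ i : ℕ, ∀ h : i + 1 < n,
    1 ≤ d ⟨i + 1, h⟩ ∧ d ⟨i + 1, h⟩ ≤ d ⟨i, Nat.lt_of_succ_lt h⟩ + 1)

/-- `M(t,t')`: the largest `m` such that the depth sequences of the DFS trees
of the bracketings `t` and `t'` are congruent modulo `m`. -/
noncomputable def Mval (t t' : BTree) : ℕ :=
  sSup {m : ℕ | ∀ i < t.size, t.depth i ≡ t'.depth i [MOD m]}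

end AssocSpec
namespace AssocSpec
namespace BTree

theorem size_pos (t : BTree) : 1 ≤ t.size := by
  induction t with
  | leaf => exact le_refl _
  | node l r ihl ihr => simp only [size]; omega

/-- A recursive reformulation of `depth`. -/
def dep : BTree → ℕ → ℕ
  | leaf, _ => 0
  | node l r, m =>
      if m < l.size then dep l m
      else if m < l.size + r.size then dep r (m - l.size) + 1 else 0

theorem depths_length (t : BTree) : t.depths.length = t.size := by
  induction t with
  | leaf => rfl
  | node l r ihl ihr => simp [depths, size, ihl, ihr]

theorem dep_ge (t : BTree) (m : ℕ) (h : t.size ≤ m) : dep t m = 0 := by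
  cases t with
  | leaf => rfl
  | node l r =>
    simp only [size] at h
    simp only [dep]
    rw [if_neg (by omega), if_neg (by omega)]

theorem dep_zero (t : BTree) : dep t 0 = 0 := by
  induction t with
  | leaf => rfl
  | node l r ihl ihr =>
    simp only [dep]
    rw [if_pos (by have := size_pos l; omega)]
    exact ihl

theorem dep_pos (t : BTree) (m : ℕ) (h0 : 0 < m) (h1 : m < t.size) : 1 ≤ dep t m := by
  induction t generalizing m with
  | leaf => simp [size] at h1; omega
  | node l r ihl ihr =>
    simp only [size] at h1
    simp only [dep]
    by_cases hm : m < l.size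
    · rw [if_pos hm]; exact ihl m h0 hm
    · rw [if_neg hm, if_pos (by omega)]; omega

theorem depth_eq_dep (t : BTree) (m : ℕ) : t.depth m = dep t m := by
  induction t generalizing m with
  | leaf =>
    simp only [depth, depths, dep]
    match m with
    | 0 => rfl
    | n + 1 => rfl
  | node l r ihl ihr =>
    simp only [depth, depths, dep] at *
    by_cases hm : m < l.size
    · rw [List.getD_append _ _ _ _ (by rw [depths_length]; exact hm), if_pos hm]
      exact ihl m
    · rw [List.getD_append_right _ _ _ _ (by rw [depths_length]; omega), if_neg hm,
        depths_length]
      by_cases hm2 : m < l.size + r.size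
      · have hlt : m - l.size < (r.depths.map (· + 1)).length := by
          simp [depths_length]; omega
        rw [List.getD_eq_getElem _ _ hlt, List.getElem_map, if_pos hm2,
          ← List.getD_eq_getElem r.depths 0 (by simpa [depths_length] using hlt)]
        rw [ihr]
      · rw [List.getD_eq_default _ _ (by simp [depths_length]; omega), if_neg hm2]

theorem size_eq_one {t : BTree} (h : t.size = 1) : t = leaf := by
  cases t with
  | leaf => rfl
  | node l r => have := size_pos l; have := size_pos r; simp [size] at h; omega

theorem dep_node_left {l r : BTree} {m : ℕ} (h : m < l.size) :
    dep (node l r) m = dep l m := by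
  simp only [dep]; rw [if_pos h]

theorem dep_node_right {l r : BTree} {m : ℕ} (h1 : l.size ≤ m) (h2 : m < l.size + r.size) :
    dep (node l r) m = dep r (m - l.size) + 1 := by
  simp only [dep]; rw [if_neg (by omega), if_pos h2]

theorem dep_inj_helper (l r l' r' : BTree) (hs : l.size + r.size = l'.size + r'.size)
    (hd : ∀ m, dep (node l r) m = dep (node l' r') m) (hlt : l.size < l'.size) : False := by
  have hr' := size_pos r'
  have hr := size_pos r
  have h1 : dep (node l' r') l'.size = 1 := by
    rw [dep_node_right le_rfl (by omega), Nat.sub_self, dep_zero]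
  have h2 : dep (node l r) l'.size = dep r (l'.size - l.size) + 1 :=
    dep_node_right (by omega) (by omega)
  have h3 : 1 ≤ dep r (l'.size - l.size) := dep_pos r _ (by omega) (by omega)
  have := hd l'.size
  omega

theorem dep_inj : ∀ t t' : BTree, t.size = t'.size → (∀ m, dep t m = dep t' m) → t = t' := by
  intro t
  induction t with
  | leaf =>
    intro t' hs _
    exact (size_eq_one (by rw [← hs]; rfl)).symm
  | node l r ihl ihr =>
    intro t' hs hd
    cases t' with
    | leaf =>
      have := size_pos l; have := size_pos r
      simp [size] at hs; omega
    | node l' r' =>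
      simp only [size] at hs
      have hll : l.size = l'.size := by
        rcases lt_trichotomy l.size l'.size with h | h | h
        · exact absurd (dep_inj_helper l r l' r' hs hd h) (by simp)
        · exact h
        · exact absurd (dep_inj_helper l' r' l r hs.symm (fun m => (hd m).symm) h) (by simp)
      have hrr : r.size = r'.size := by omega
      have hl : l = l' := by
        apply ihl l' hll
        intro m
        by_cases hm : m < l.size
        · have := hd m
          rwa [dep_node_left hm, dep_node_left (hll ▸ hm)] at this
        · rw [dep_ge l m (by omega), dep_ge l' m (by omega)]
      have hr : r = r' := by
        apply ihr r' hrr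
        intro m
        by_cases hm : m < r.size
        · have := hd (l.size + m)
          rw [dep_node_right (by omega) (by omega), hll,
            dep_node_right (by omega) (by omega)] at this
          simpa using this
        · rw [dep_ge r m (by omega), dep_ge r' m (by omega)]
      rw [hl, hr]

end BTree
end AssocSpec
namespace AssocSpec
namespace BTree

theorem edge_spec : ∀ (t : BTree) (k p c : ℕ), (p, c) ∈ t.edgesFrom k →
    k ≤ p ∧ p < c ∧ c < k + t.size ∧ dep t (c - k) = dep t (p - k) + 1 ∧
      ∀ m, p < m → m < c → dep t (p - k) < dep t (m - k) := by
  intro t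
  induction t with
  | leaf => intro k p c h; simp [edgesFrom] at h
  | node l r ihl ihr =>
    intro k p c h
    have hls := size_pos l
    have hrs := size_pos r
    simp only [edgesFrom, List.mem_cons, List.mem_append] at h
    rcases h with h | h | h
    · have hp : p = k := congrArg Prod.fst h
      have hc : c = k + l.size := congrArg Prod.snd h
      have e1 : c - k = l.size := by omega
      have e2 : p - k = 0 := by omega
      refine ⟨by omega, by omega, by simp only [size]; omega, ?_, ?_⟩
      · rw [e1, e2, dep_zero, dep_node_right le_rfl (by omega), Nat.sub_self, dep_zero]
      · intro m hm1 hm2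
        rw [e2, dep_zero, dep_node_left (show m - k < l.size by omega)]
        exact dep_pos l (m - k) (by omega) (by omega)
    · obtain ⟨h1, h2, h3, h4, h5⟩ := ihl k p c h
      refine ⟨h1, h2, by simp only [size]; omega, ?_, ?_⟩
      · rw [dep_node_left (by omega), dep_node_left (by omega)]; exact h4
      · intro m hm1 hm2
        rw [dep_node_left (by omega), dep_node_left (by omega)]
        exact h5 m hm1 hm2
    · obtain ⟨h1, h2, h3, h4, h5⟩ := ihr (k + l.size) p c h
      have e1 : c - k - l.size = c - (k + l.size) := by omega
      have e2 : p - k - l.size = p - (k + l.size) := by omega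
      refine ⟨by omega, h2, by simp only [size]; omega, ?_, ?_⟩
      · rw [dep_node_right (by omega) (by omega),
          dep_node_right (by omega) (by omega), e1, e2, h4]
      · intro m hm1 hm2
        have e3 : m - k - l.size = m - (k + l.size) := by omega
        rw [dep_node_right (by omega) (by omega),
          dep_node_right (by omega) (by omega), e2, e3]
        have := h5 m hm1 hm2
        omega

theorem child_has_parent : ∀ (t : BTree) (k m : ℕ), 0 < m → m < t.size →
    ∃ p, (p, k + m) ∈ t.edgesFrom k := by
  intro t
  induction t with
  | leaf => intro k m h0 h1; simp [size] at h1; omega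
  | node l r ihl ihr =>
    intro k m h0 h1
    simp only [size] at h1
    rcases lt_trichotomy m l.size with h | h | h
    · obtain ⟨p, hp⟩ := ihl k m h0 h
      exact ⟨p, by simp only [edgesFrom, List.mem_cons, List.mem_append]; exact Or.inr (Or.inl hp)⟩
    · subst h
      exact ⟨k, by simp [edgesFrom]⟩
    · obtain ⟨p, hp⟩ := ihr (k + l.size) (m - l.size) (by omega) (by omega)
      rw [show k + l.size + (m - l.size) = k + m by omega] at hp
      exact ⟨p, by simp only [edgesFrom, List.mem_cons, List.mem_append]; exact Or.inr (Or.inr hp)⟩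

end BTree

theorem gaOp_none_left {V : Type*} (E : V → V → Prop) (y : Option V) :
    gaOp E none y = none := by cases y <;> rfl

theorem gaOp_none_right {V : Type*} (E : V → V → Prop) (x : Option V) :
    gaOp E x none = none := by cases x <;> rfl

open Classical in
theorem gaOp_some_some {V : Type*} (E : V → V → Prop) (x y : V) :
    gaOp E (some x) (some y) = if E x y then some x else none := rfl

theorem eval_hom {V : Type*} (Er : V → V → Prop) (g : ℕ → V) :
    ∀ (t : BTree) (k : ℕ), (∀ p c, (p, c) ∈ t.edgesFrom k → Er (g p) (g c)) →
      BTree.evalFrom (gaOp Er) t (fun m => some (g m)) k = some (g k) := by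
  intro t
  induction t with
  | leaf => intro k _; rfl
  | node l r ihl ihr =>
    intro k h
    have hroot : Er (g k) (g (k + l.size)) := by
      apply h; simp [BTree.edgesFrom]
    have hl := ihl k (fun p c hm => h p c (by
      simp only [BTree.edgesFrom, List.mem_cons, List.mem_append]; exact Or.inr (Or.inl hm)))
    have hr := ihr (k + l.size) (fun p c hm => h p c (by
      simp only [BTree.edgesFrom, List.mem_cons, List.mem_append]; exact Or.inr (Or.inr hm)))
    show gaOp Er _ _ = _
    rw [hl, hr, gaOp_some_some, if_pos hroot]

theorem eval_some {V : Type*} (Er : V → V → Prop) (g : ℕ → V) :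
    ∀ (t : BTree) (k : ℕ) (a : V),
      BTree.evalFrom (gaOp Er) t (fun m => some (g m)) k = some a →
      a = g k ∧ ∀ p c, (p, c) ∈ t.edgesFrom k → Er (g p) (g c) := by
  intro t
  induction t with
  | leaf =>
    intro k a h
    refine ⟨by simpa [BTree.evalFrom] using h.symm, ?_⟩
    intro p c hm
    simp [BTree.edgesFrom] at hm
  | node l r ihl ihr =>
    intro k a h
    replace h : gaOp Er (BTree.evalFrom (gaOp Er) l (fun m => some (g m)) k)
        (BTree.evalFrom (gaOp Er) r (fun m => some (g m)) (k + l.size)) = some a := h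
    cases hX : BTree.evalFrom (gaOp Er) l (fun m => some (g m)) k with
    | none => rw [hX, gaOp_none_left] at h; exact absurd h (by simp)
    | some x =>
      cases hY : BTree.evalFrom (gaOp Er) r (fun m => some (g m)) (k + l.size) with
      | none => rw [hX, hY, gaOp_none_right] at h; exact absurd h (by simp)
      | some y =>
        rw [hX, hY, gaOp_some_some] at h
        by_cases hE : Er x y
        · rw [if_pos hE] at h
          obtain ⟨hx, hledges⟩ := ihl k x hX
          obtain ⟨hy, hredges⟩ := ihr (k + l.size) y hY
          have hax : a = x := by simpa using h.symm
          refine ⟨by rw [hax, hx], ?_⟩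
          intro p c hm
          simp only [BTree.edgesFrom, List.mem_cons, List.mem_append] at hm
          rcases hm with hm | hm | hm
          · have hp : p = k := congrArg Prod.fst hm
            have hc : c = k + l.size := congrArg Prod.snd hm
            subst hp; subst hc
            rwa [← hx, ← hy]
          · exact hledges p c hm
          · exact hredges p c hm
        · rw [if_neg hE] at h; exact absurd h (by simp)

end AssocSpec
namespace AssocSpec

theorem no_edge {V : Type*} {E : V → V → Prop} {u y z : V}
    (hy : ¬ Reach E y u) (hz : Reach E z u) : ¬ E y z :=
  fun h => hy (Relation.ReflTransGen.trans (Relation.ReflTransGen.single h) hz)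

theorem reach_walk {V : Type*} {E : V → V → Prop} {a b : V} (h : Reach E a b) :
    ∃ (r : ℕ) (x : ℕ → V), x 0 = a ∧ x r = b ∧ ∀ m < r, E (x m) (x (m + 1)) := by
  induction h with
  | refl => exact ⟨0, fun _ => a, rfl, rfl, by omega⟩
  | @tail b' c hab hbc ih =>
    obtain ⟨r, x, h0, hr, hs⟩ := ih
    refine ⟨r + 1, fun m => if m ≤ r then x m else c, by simp [h0], by simp, ?_⟩
    intro m hm
    rcases Nat.lt_or_ge m r with h | h
    · simp only [if_pos (show m ≤ r by omega), if_pos (show m + 1 ≤ r by omega)]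
      exact hs m h
    · have h1 : m ≤ r := by omega
      simp only [if_pos h1, if_neg (show ¬ m + 1 ≤ r by omega)]
      have hxm : x m = x r := by rw [show m = r by omega]
      rw [hxm, hr]; exact hbc

theorem walk_reach {V : Type*} {E : V → V → Prop} {x : ℕ → V} {r : ℕ}
    (hx : ∀ m < r, E (x m) (x (m + 1))) {a b : ℕ} (hab : a ≤ b) (hbr : b ≤ r) :
    Reach E (x a) (x b) := by
  have aux : ∀ k a, a + k ≤ r → Reach E (x a) (x (a + k)) := by
    intro k
    induction k with
    | zero => intro a _; exact Relation.ReflTransGen.refl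
    | succ n ih =>
      intro a h
      exact Relation.ReflTransGen.tail (ih a (by omega)) (hx (a + n) (by omega))
  have h := aux (b - a) a (by omega)
  rwa [Nat.add_sub_cancel' hab] at h

theorem walk_append {V : Type*} {E : V → V → Prop} {x y : ℕ → V} {r s : ℕ}
    (hx : ∀ m < r, E (x m) (x (m + 1))) (hy : ∀ m < s, E (y m) (y (m + 1)))
    (hxy : x r = y 0) :
    ∃ z : ℕ → V, z 0 = x 0 ∧ z (r + s) = y s ∧ ∀ m < r + s, E (z m) (z (m + 1)) := by
  have hzm : ∀ n, r ≤ n → (if n ≤ r then x n else y (n - r)) = y (n - r) := by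
    intro n hn
    by_cases h : n ≤ r
    · rw [if_pos h]
      have hnr : n = r := by omega
      rw [hnr, Nat.sub_self, hxy]
    · rw [if_neg h]
  refine ⟨fun m => if m ≤ r then x m else y (m - r), by simp, ?_, ?_⟩
  · show (if r + s ≤ r then x (r + s) else y (r + s - r)) = y s
    rw [hzm (r + s) (by omega), Nat.add_sub_cancel_left]
  · intro m hm
    show E (if m ≤ r then x m else y (m - r)) (if m + 1 ≤ r then x (m + 1) else y (m + 1 - r))
    rcases Nat.lt_or_ge m r with h | h
    · rw [if_pos (show m ≤ r by omega), if_pos (show m + 1 ≤ r by omega)]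
      exact hx m h
    · rw [hzm m h, hzm (m + 1) (by omega), show m + 1 - r = (m - r) + 1 by omega]
      exact hy (m - r) (by omega)

theorem single_walk {V : Type*} {E : V → V → Prop} {a b : V} (h : E a b) :
    ∀ m < 1, E ((fun m => if m = 0 then a else b) m) ((fun m => if m = 0 then a else b) (m + 1)) := by
  intro m hm
  have hm0 : m = 0 := by omega
  show E (if m = 0 then a else b) (if m + 1 = 0 then a else b)
  rw [if_pos hm0, if_neg (by omega)]
  exact h

theorem per_step {V : Type*} {E : V → V → Prop} {y : ℕ → V} {P : ℕ} (hP : 0 < P)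
    (hc : y P = y 0) (hs : ∀ m < P, E (y m) (y (m + 1))) :
    ∀ m, E (y (m % P)) (y ((m + 1) % P)) := by
  intro m
  have hj : m % P < P := Nat.mod_lt _ hP
  have h1 : (m + 1) % P = (m % P + 1) % P := by rw [Nat.mod_add_mod]
  rcases Nat.lt_or_ge (m % P + 1) P with h | h
  · rw [h1, Nat.mod_eq_of_lt h]
    exact hs _ hj
  · have h : m % P + 1 = P := by omega
    have h2 : (m + 1) % P = 0 := by rw [h1, h, Nat.mod_self]
    rw [h2, ← hc]
    have h3 := hs (m % P) hj
    rwa [h] at h3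

/-- The crossing walk: follow `cwU` up to time `d-1`, then the path `xp`
(of length `rp`), then `cwV`. -/
def Wcf {V : Type*} (cwU xp cwV : ℕ → V) (d rp : ℕ) : ℕ → V := fun k =>
  if k ≤ d - 1 then cwU k else if k ≤ d - 1 + rp then xp (k - (d - 1)) else cwV k

theorem Wcf_low {V : Type*} (cwU xp cwV : ℕ → V) (d rp k : ℕ) (h : k ≤ d - 1) :
    Wcf cwU xp cwV d rp k = cwU k := if_pos h

theorem Wcf_step {V : Type*} {E : V → V → Prop} {cwU xp cwV : ℕ → V} {d rp : ℕ}
    (_hd : 1 ≤ d) (hrp : 1 ≤ rp)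
    (hcwU : ∀ m, E (cwU m) (cwU (m + 1)))
    (hxp : ∀ m < rp, E (xp m) (xp (m + 1)))
    (hcwV : ∀ m, E (cwV m) (cwV (m + 1)))
    (h1 : cwU (d - 1) = xp 0) (h2 : xp rp = cwV (d - 1 + rp)) :
    ∀ k, E (Wcf cwU xp cwV d rp k) (Wcf cwU xp cwV d rp (k + 1)) := by
  intro k
  unfold Wcf
  rcases Nat.lt_or_ge k (d - 1) with hk | hk
  · rw [if_pos (show k ≤ d - 1 by omega), if_pos (show k + 1 ≤ d - 1 by omega)]
    exact hcwU k
  rcases eq_or_lt_of_le hk with hk1 | hk1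
  · -- k = d - 1
    rw [if_pos (show k ≤ d - 1 by omega), if_neg (show ¬ k + 1 ≤ d - 1 by omega),
      if_pos (show k + 1 ≤ d - 1 + rp by omega),
      show k + 1 - (d - 1) = 1 by omega, show k = d - 1 by omega, h1]
    exact hxp 0 hrp
  rcases Nat.lt_or_ge k (d - 1 + rp) with hk2 | hk2
  · rw [if_neg (show ¬ k ≤ d - 1 by omega), if_pos (show k ≤ d - 1 + rp by omega),
      if_neg (show ¬ k + 1 ≤ d - 1 by omega), if_pos (show k + 1 ≤ d - 1 + rp by omega),
      show k + 1 - (d - 1) = (k - (d - 1)) + 1 by omega]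
    exact hxp (k - (d - 1)) (by omega)
  rcases eq_or_lt_of_le hk2 with hk3 | hk3
  · -- k = d - 1 + rp
    rw [if_neg (show ¬ k ≤ d - 1 by omega), if_pos (show k ≤ d - 1 + rp by omega),
      if_neg (show ¬ k + 1 ≤ d - 1 by omega), if_neg (show ¬ k + 1 ≤ d - 1 + rp by omega),
      show k - (d - 1) = rp by omega, h2, show d - 1 + rp = k by omega]
    exact hcwV k
  · rw [if_neg (show ¬ k ≤ d - 1 by omega), if_neg (show ¬ k ≤ d - 1 + rp by omega),
      if_neg (show ¬ k + 1 ≤ d - 1 by omega), if_neg (show ¬ k + 1 ≤ d - 1 + rp by omega)]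
    exact hcwV k

theorem Wcf_B {V : Type*} {E : V → V → Prop} {u : V} {cwU xp cwV : ℕ → V} {d rp : ℕ}
    (_hd : 1 ≤ d)
    (hxpB : ∀ m, 1 ≤ m → m ≤ rp → ¬ Reach E (xp m) u)
    (hcwVB : ∀ m, ¬ Reach E (cwV m) u) :
    ∀ k, d ≤ k → ¬ Reach E (Wcf cwU xp cwV d rp k) u := by
  intro k hk
  unfold Wcf
  rw [if_neg (show ¬ k ≤ d - 1 by omega)]
  by_cases h : k ≤ d - 1 + rp
  · rw [if_pos h]; exact hxpB _ (by omega) (by omega)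
  · rw [if_neg h]; exact hcwVB k

/-- The distinguishing assignment: inside the subtree interval `[i, e)` follow the
cycle walk `cwU`, outside follow the crossing walk `W`; in both cases at the
respective depth. -/
def crossMap {V : Type*} (cwU W : ℕ → V) (dt : ℕ → ℕ) (i e : ℕ) : ℕ → V := fun m =>
  if i ≤ m ∧ m < e then cwU (dt m) else W (dt m)

theorem crossMap_in {V : Type*} (cwU W : ℕ → V) (dt : ℕ → ℕ) (i e m : ℕ)
    (h1 : i ≤ m) (h2 : m < e) : crossMap cwU W dt i e m = cwU (dt m) := by
  unfold crossMap; rw [if_pos ⟨h1, h2⟩]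

theorem crossMap_out {V : Type*} (cwU W : ℕ → V) (dt : ℕ → ℕ) (i e m : ℕ)
    (h : ¬ (i ≤ m ∧ m < e)) : crossMap cwU W dt i e m = W (dt m) := by
  unfold crossMap; rw [if_neg h]

theorem core {V : Type*} (E : V → V → Prop) (u v : V)
    (hu : InNontrivialSCC E u) (hv : InNontrivialSCC E v)
    (huv : Reach E u v) (hvu : ¬ Reach E v u)
    (t t' : BTree) (hsz : t.size = t'.size)
    (i : ℕ) (hi : i < t.size)
    (hagree : ∀ j < i, BTree.dep t j = BTree.dep t' j)
    (hdlt : BTree.dep t i < BTree.dep t' i)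
    (hsat : ∀ f, BTree.termOp (gaOp E) t f = BTree.termOp (gaOp E) t' f) : False := by
  classical
  obtain ⟨w, huw, hwu⟩ := hu
  obtain ⟨w', hvw', hw'v⟩ := hv
  obtain ⟨d, hd_def⟩ : ∃ d, BTree.dep t i = d := ⟨_, rfl⟩
  have hi0 : 0 < i := by
    rcases Nat.eq_zero_or_pos i with h | h
    · rw [h, BTree.dep_zero, BTree.dep_zero] at hdlt; omega
    · exact h
  have hd1 : 1 ≤ d := hd_def ▸ BTree.dep_pos t i hi0 hi
  -- the walk from u to v, truncated at the last vertex that can reach back to u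
  obtain ⟨r, x, hx0, hxr, hxs⟩ := reach_walk huv
  obtain ⟨s, hs_def⟩ : ∃ s, Nat.findGreatest (fun m => Reach E (x m) u) r = s := ⟨_, rfl⟩
  have hs_le : s ≤ r := hs_def ▸ Nat.findGreatest_le r
  have hs_reach : Reach E (x s) u := by
    rw [← hs_def]
    exact Nat.findGreatest_spec (P := fun m => Reach E (x m) u) (Nat.zero_le r)
      (show Reach E (x 0) u by rw [hx0]; exact Relation.ReflTransGen.refl)
  have hs_max : ∀ m, s < m → m ≤ r → ¬ Reach E (x m) u := by
    intro m h1 h2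
    exact Nat.findGreatest_is_greatest (hs_def ▸ h1) h2
  obtain ⟨rp, hrp_def⟩ : ∃ rp, r - s = rp := ⟨_, rfl⟩
  obtain ⟨xp, hxp_def⟩ : ∃ xp : ℕ → V, (fun m => x (s + m)) = xp := ⟨_, rfl⟩
  have hxpv : ∀ m, xp m = x (s + m) := fun m => by rw [← hxp_def]
  have hxp0 : xp 0 = x s := by rw [hxpv, Nat.add_zero]
  have hxpr : xp rp = v := by rw [hxpv, show s + rp = r by omega, hxr]
  have hxps : ∀ m < rp, E (xp m) (xp (m + 1)) := by
    intro m hm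
    rw [hxpv, hxpv, show s + (m + 1) = (s + m) + 1 by omega]
    exact hxs (s + m) (by omega)
  have hrp1 : 1 ≤ rp := by
    by_contra h
    apply hvu
    have h0 : rp = 0 := by omega
    rw [← hxpr, h0, hxp0]
    exact hs_reach
  have hxpB : ∀ m, 1 ≤ m → m ≤ rp → ¬ Reach E (xp m) u := by
    intro m h1 h2
    rw [hxpv]
    exact hs_max (s + m) (by omega) (by omega)
  -- a closed walk through x s inside the component of u
  have huu' : Reach E u (x s) := by
    rw [← hx0]
    exact walk_reach hxs (Nat.zero_le s) hs_le
  obtain ⟨a1, y1, hy10, hy1r, hy1s⟩ := reach_walk hs_reach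
  obtain ⟨a3, y3, hy30, hy3r, hy3s⟩ := reach_walk hwu
  obtain ⟨a4, y4, hy40, hy4r, hy4s⟩ := reach_walk huu'
  obtain ⟨z1, hz10, hz1r, hz1s⟩ := walk_append hy1s (single_walk huw) (by rw [hy1r]; exact (if_pos rfl).symm)
  have hz1w : z1 (a1 + 1) = w := by rw [hz1r]; exact if_neg one_ne_zero
  obtain ⟨z2, hz20, hz2r, hz2s⟩ := walk_append hz1s hy3s (by rw [hz1w, hy30])
  obtain ⟨yy, hyy0, hyyr, hyys⟩ := walk_append hz2s hy4s (by rw [hz2r, hy3r, hy40])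
  obtain ⟨P, hP_def⟩ : ∃ P, a1 + 1 + a3 + a4 = P := ⟨_, rfl⟩
  have hPpos : 0 < P := by omega
  rw [hP_def] at hyyr hyys
  have hyy0' : yy 0 = x s := by rw [hyy0, hz20, hz10, hy10]
  have hyyP : yy P = x s := by rw [hyyr, hy4r]
  have hyyA : ∀ m ≤ P, Reach E (yy m) u := by
    intro m hm
    have h1 : Reach E (yy m) (yy P) := walk_reach hyys hm le_rfl
    rw [hyyP] at h1
    exact h1.trans hs_reach
  -- a closed walk through v
  obtain ⟨b3, t3, ht30, ht3r, ht3s⟩ := reach_walk hw'v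
  obtain ⟨zz, hzz0, hzzr, hzzs⟩ := walk_append (single_walk hvw') ht3s
    (by rw [ht30]; exact if_neg one_ne_zero)
  obtain ⟨Q, hQ_def⟩ : ∃ Q, 1 + b3 = Q := ⟨_, rfl⟩
  have hQpos : 0 < Q := by omega
  rw [hQ_def] at hzzr hzzs
  have hzz0' : zz 0 = v := by rw [hzz0]; exact if_pos rfl
  have hzzQ : zz Q = v := by rw [hzzr, ht3r]
  have hzzB : ∀ m ≤ Q, ¬ Reach E (zz m) u := by
    intro m hm hr2
    apply hvu
    have h1 : Reach E (zz 0) (zz m) := walk_reach hzzs (Nat.zero_le m) hm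
    rw [hzz0'] at h1
    exact h1.trans hr2
  -- the shifted periodic walks
  obtain ⟨cwU, hcwU_def⟩ : ∃ cwU : ℕ → V, (fun m => yy ((m + (P * d - (d - 1))) % P)) = cwU :=
    ⟨_, rfl⟩
  have hcwUv : ∀ m, cwU m = yy ((m + (P * d - (d - 1))) % P) := fun m => by rw [← hcwU_def]
  have hcwUstep : ∀ m, E (cwU m) (cwU (m + 1)) := by
    intro m
    rw [hcwUv, hcwUv, show m + 1 + (P * d - (d - 1)) = m + (P * d - (d - 1)) + 1 by omega]
    exact per_step hPpos (by rw [hyyP, hyy0']) hyys _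
  have hshUle : d - 1 ≤ P * d := by
    have h := Nat.le_mul_of_pos_left d hPpos
    omega
  have hcwUd : cwU (d - 1) = x s := by
    rw [hcwUv, Nat.add_sub_cancel' hshUle, Nat.mul_mod_right, hyy0']
  have hcwUA : ∀ m, Reach E (cwU m) u := by
    intro m
    rw [hcwUv]
    exact hyyA _ (le_of_lt (Nat.mod_lt _ hPpos))
  obtain ⟨cwV, hcwV_def⟩ : ∃ cwV : ℕ → V,
      (fun m => zz ((m + (Q * (d + rp) - (d - 1 + rp))) % Q)) = cwV := ⟨_, rfl⟩
  have hcwVv : ∀ m, cwV m = zz ((m + (Q * (d + rp) - (d - 1 + rp))) % Q) :=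
    fun m => by rw [← hcwV_def]
  have hcwVstep : ∀ m, E (cwV m) (cwV (m + 1)) := by
    intro m
    rw [hcwVv, hcwVv,
      show m + 1 + (Q * (d + rp) - (d - 1 + rp)) = m + (Q * (d + rp) - (d - 1 + rp)) + 1 by omega]
    exact per_step hQpos (by rw [hzzQ, hzz0']) hzzs _
  have hshVle : d - 1 + rp ≤ Q * (d + rp) := by
    have h := Nat.le_mul_of_pos_left (d + rp) hQpos
    omega
  have hcwVd : cwV (d - 1 + rp) = v := by
    rw [hcwVv, Nat.add_sub_cancel' hshVle, Nat.mul_mod_right, hzz0']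
  have hcwVB : ∀ m, ¬ Reach E (cwV m) u := by
    intro m
    rw [hcwVv]
    exact hzzB _ (le_of_lt (Nat.mod_lt _ hQpos))
  -- the crossing walk
  have hWstep : ∀ k, E (Wcf cwU xp cwV d rp k) (Wcf cwU xp cwV d rp (k + 1)) :=
    Wcf_step hd1 hrp1 hcwUstep hxps hcwVstep (by rw [hcwUd, hxp0]) (by rw [hxpr, hcwVd])
  have hWB : ∀ k, d ≤ k → ¬ Reach E (Wcf cwU xp cwV d rp k) u := Wcf_B hd1 hxpB hcwVB
  -- the end of the subtree interval of the vertex i in G(t)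
  obtain ⟨e, he_def⟩ : ∃ e, sInf {k | i < k ∧ (t.size ≤ k ∨ BTree.dep t k ≤ d)} = e := ⟨_, rfl⟩
  have heES : i < e ∧ (t.size ≤ e ∨ BTree.dep t e ≤ d) := by
    rw [← he_def]
    exact Nat.sInf_mem (⟨t.size, hi, Or.inl le_rfl⟩ :
      Set.Nonempty {k | i < k ∧ (t.size ≤ k ∨ BTree.dep t k ≤ d)})
  have hie : i < e := heES.1
  have hlt_e : ∀ k, i < k → k < e → k < t.size ∧ d < BTree.dep t k := by
    intro k h1 h2
    rw [← he_def] at h2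
    have h3 := Nat.notMem_of_lt_sInf h2
    simp only [Set.mem_setOf_eq] at h3
    push_neg at h3
    exact h3 h1
  -- the distinguishing assignment
  obtain ⟨f, hf_def⟩ : ∃ f : ℕ → V,
      crossMap cwU (Wcf cwU xp cwV d rp) (BTree.dep t) i e = f := ⟨_, rfl⟩
  have hfS : ∀ m, i ≤ m → m < e → f m = cwU (BTree.dep t m) := by
    intro m h1 h2
    rw [← hf_def]
    exact crossMap_in _ _ _ _ _ _ h1 h2
  have hfN : ∀ m, ¬ (i ≤ m ∧ m < e) → f m = Wcf cwU xp cwV d rp (BTree.dep t m) := by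
    intro m h
    rw [← hf_def]
    exact crossMap_out _ _ _ _ _ _ h
  -- f is a homomorphism of G(t)
  have hhom : ∀ p c, (p, c) ∈ t.edgesFrom 0 → E (f p) (f c) := by
    intro p c hm
    obtain ⟨-, hpc, hcn, hdep, hint⟩ := BTree.edge_spec t 0 p c hm
    rw [Nat.zero_add] at hcn
    simp only [Nat.sub_zero] at hdep hint
    by_cases hpS : i ≤ p ∧ p < e
    · have hdp : d ≤ BTree.dep t p := by
        rcases eq_or_lt_of_le hpS.1 with h | h
        · rw [← h, hd_def]
        · exact (hlt_e p h hpS.2).2.le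
      have hcS : i ≤ c ∧ c < e := by
        refine ⟨by omega, ?_⟩
        by_contra hce
        push_neg at hce
        rcases eq_or_lt_of_le hce with h | h
        · rcases heES.2 with h2 | h2
          · omega
          · rw [h] at h2; omega
        · have h5 := hint e hpS.2 h
          rcases heES.2 with h2 | h2
          · omega
          · omega
      rw [hfS p hpS.1 hpS.2, hfS c hcS.1 hcS.2, hdep]
      exact hcwUstep _
    · by_cases hcS : i ≤ c ∧ c < e
      · have hci : c = i := by
          by_contra hci
          have hic : i < c := lt_of_le_of_ne hcS.1 (Ne.symm hci)
          have hpi : p < i := by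
            rcases not_and_or.mp hpS with h | h
            · omega
            · push_neg at h; omega
          have h5 := hint i hpi hic
          have h6 := (hlt_e c hic hcS.2).2
          omega
        have hdp : BTree.dep t p = d - 1 := by
          rw [hci, hd_def] at hdep
          omega
        rw [hfN p hpS, hfS c hcS.1 hcS.2, hdp, hci, hd_def,
          Wcf_low _ _ _ _ _ _ le_rfl, show d = d - 1 + 1 by omega]
        exact hcwUstep (d - 1)
      · rw [hfN p hpS, hfN c hcS, hdep]
        exact hWstep _
  -- conclusion
  have hT : BTree.termOp (gaOp E) t (fun m => some (f m)) = some (f 0) :=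
    eval_hom E f t 0 hhom
  have hT' : BTree.termOp (gaOp E) t' (fun m => some (f m)) = some (f 0) :=
    (hsat (fun m => some (f m))).symm.trans hT
  obtain ⟨-, hedges'⟩ := eval_some E f t' 0 (f 0) hT'
  obtain ⟨p', hp'⟩ := BTree.child_has_parent t' 0 i hi0 (by omega)
  rw [Nat.zero_add] at hp'
  obtain ⟨-, hp'i, -, hdep', -⟩ := BTree.edge_spec t' 0 p' i hp'
  simp only [Nat.sub_zero] at hdep'
  have hE' := hedges' p' i hp'
  have hfp' : f p' = Wcf cwU xp cwV d rp (BTree.dep t p') := hfN p' (by omega)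
  have hdtp' : BTree.dep t p' = BTree.dep t' p' := hagree p' hp'i
  have hge : d ≤ BTree.dep t p' := by rw [hdtp']; omega
  have hB' : ¬ Reach E (f p') u := by rw [hfp']; exact hWB _ hge
  have hA' : Reach E (f i) u := by
    rw [hfS i le_rfl hie]
    exact hcwUA _
  exact no_edge hB' hA' hE'

end AssocSpec
open AssocSpec in
/-- If the graph algebra of a digraph `G` satisfies a
nontrivial bracketing identity `t ≈ t'`, then there is no path from a vertex
of a nontrivial strongly connected component of `G` to a vertex of a
different nontrivial strongly connected component. -/
theorem stmt16 {V : Type*} [Nonempty V] (E : V → V → Prop)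
    (t t' : BTree) (hsz : t.size = t'.size) (hne : t ≠ t')
    (hsat : Satisfies (gaOp E) t t') :
    ∀ u v : V, InNontrivialSCC E u → InNontrivialSCC E v →
      Reach E u v → Reach E v u := by
  intro u v hu hv huv
  by_contra hvu
  classical
  have hdep_ne : ∃ m, BTree.dep t m ≠ BTree.dep t' m := by
    by_contra h
    push_neg at h
    exact hne (BTree.dep_inj t t' hsz h)
  obtain ⟨i, hi_spec, hi_min⟩ : ∃ i, BTree.dep t i ≠ BTree.dep t' i ∧
      ∀ j < i, ¬ BTree.dep t j ≠ BTree.dep t' j :=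
    ⟨Nat.find hdep_ne, Nat.find_spec hdep_ne, fun j hj => Nat.find_min hdep_ne hj⟩
  have hagree : ∀ j < i, BTree.dep t j = BTree.dep t' j := fun j hj =>
    not_not.mp (hi_min j hj)
  have hi_lt : i < t.size := by
    by_contra h
    push_neg at h
    exact hi_spec (by rw [BTree.dep_ge t i h, BTree.dep_ge t' i (by omega)])
  rcases Nat.lt_or_ge (BTree.dep t i) (BTree.dep t' i) with h | h
  · exact core E u v hu hv huv hvu t t' hsz i hi_lt hagree h hsat
  · have hlt : BTree.dep t' i < BTree.dep t i := by omega
    exact core E u v hu hv huv hvu t' t hsz.symm i (by omega)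
      (fun j hj => (hagree j hj).symm) hlt (fun f => (hsat f).symm)
end

section
/- DFS trees are uniquely determined by their depth sequences: if T and T' are DFS trees of size n such that d_T(x_i) = d_{T'}(x_i) for all i ∈ {1, …, n}, then T = T' (they have the same edge set). -/
namespace AssocSpec

namespace DFSTree

variable {n : ℕ} (T : DFSTree n)

lemma exists_iter : ∀ i : Fin n, ∃ k, ((T.parent^[k] i : Fin n) : ℕ) = 0 := by
  intro i
  obtain ⟨m, hi⟩ : ∃ m, (i : ℕ) = m := ⟨_, rfl⟩
  induction m using Nat.strong_induction_on generalizing i with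
  | _ m ih =>
    rcases Nat.eq_zero_or_pos m with h0 | hpos
    · exact ⟨0, by simpa [h0] using hi⟩
    · obtain ⟨k, hk⟩ := ih ((T.parent i : Fin n) : ℕ)
        (by rw [← hi]; exact T.parent_lt i (hi ▸ hpos)) (T.parent i) rfl
      exact ⟨k + 1, by rwa [Function.iterate_succ_apply]⟩

lemma depth_spec (i : Fin n) : ((T.parent^[T.depth i] i : Fin n) : ℕ) = 0 :=
  Nat.sInf_mem (T.exists_iter i)

lemma depth_zero (i : Fin n) (h : (i : ℕ) = 0) : T.depth i = 0 :=
  Nat.le_antisymm (Nat.sInf_le (by simpa using h)) (Nat.zero_le _)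

lemma depth_pos (i : Fin n) (h : 0 < (i : ℕ)) : 0 < T.depth i := by
  rcases Nat.eq_zero_or_pos (T.depth i) with h0 | h1
  · have := T.depth_spec i
    rw [h0] at this
    simp at this
    omega
  · exact h1

lemma depth_parent (i : Fin n) (h : 0 < (i : ℕ)) :
    T.depth i = T.depth (T.parent i) + 1 := by
  apply Nat.le_antisymm
  · apply Nat.sInf_le
    show ((T.parent^[T.depth (T.parent i) + 1] i : Fin n) : ℕ) = 0
    rw [Function.iterate_succ_apply]
    exact T.depth_spec (T.parent i)
  · have hpos := T.depth_pos i h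
    obtain ⟨m, hm⟩ : ∃ m, T.depth i = m + 1 := ⟨T.depth i - 1, by omega⟩
    have hmem : ((T.parent^[m] (T.parent i) : Fin n) : ℕ) = 0 := by
      have hs := T.depth_spec i
      rw [hm, Function.iterate_succ_apply] at hs
      exact hs
    have h2 : T.depth (T.parent i) ≤ m := Nat.sInf_le hmem
    omega

lemma depth_iter (a : ℕ) : ∀ (j p : Fin n), 0 < (p : ℕ) → T.parent^[a] j = p →
    T.depth j = T.depth p + a := by
  induction a with
  | zero => intro j p _ h; simp at h; simp [h]
  | succ a ih =>
    intro j p hp h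
    rw [Function.iterate_succ_apply] at h
    have hj : 0 < (j : ℕ) := by
      rcases Nat.eq_zero_or_pos (j : ℕ) with h0 | h1
      · have hfix := T.parent_root j h0
        rw [hfix, Function.iterate_fixed hfix] at h
        rw [← h] at hp; omega
      · exact h1
    rw [T.depth_parent j hj, ih (T.parent j) p hp h]
    omega

lemma depth_le_middle (i j : Fin n) (hi : 0 < (i : ℕ)) (h1 : T.parent i < j)
    (h2 : j < i) : T.depth i ≤ T.depth j := by
  obtain ⟨a, ha⟩ := T.interval (T.parent i) j i (le_of_lt h1) (le_of_lt h2)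
    ⟨1, by simp⟩
  have ha1 : 1 ≤ a := by
    rcases Nat.eq_zero_or_pos a with rfl | h
    · simp at ha; rw [ha] at h1; exact absurd h1 (lt_irrefl _)
    · exact h
  rcases Nat.eq_zero_or_pos ((T.parent i : Fin n) : ℕ) with h0 | hpos
  · have hdi : T.depth i = 1 := by
      rw [T.depth_parent i hi, T.depth_zero _ h0]
    rw [hdi]
    have hj : 0 < (j : ℕ) := by
      have := (Fin.lt_def).mp h1; omega
    exact T.depth_pos j hj
  · have := T.depth_iter a j _ hpos ha
    rw [this, T.depth_parent i hi]
    omega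

end DFSTree

end AssocSpec
open AssocSpec in
/-- DFS trees are uniquely determined by their depth
sequences: if `T` and `T'` are DFS trees of size `n` with the same depth
sequence, then `T = T'`. -/
theorem stmt19 (n : ℕ) (T T' : DFSTree n)
    (hd : ∀ i : Fin n, T.depth i = T'.depth i) : T = T' := by
  have key : ∀ (S S' : DFSTree n), (∀ i, S.depth i = S'.depth i) →
      ∀ i : Fin n, 0 < (i : ℕ) → ¬ (S.parent i < S'.parent i) := by
    intro S S' hdd i hpos hlt
    have h2 : S'.parent i < i := Fin.lt_def.mpr (S'.parent_lt i hpos)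
    have hA := S.depth_le_middle i (S'.parent i) hpos hlt h2
    have hB : S'.depth (S'.parent i) < S'.depth i := by
      rw [S'.depth_parent i hpos]; omega
    rw [← hdd, ← hdd] at hB
    omega
  have hp : T.parent = T'.parent := by
    funext i
    rcases Nat.eq_zero_or_pos (i : ℕ) with h0 | hpos
    · rw [T.parent_root i h0, T'.parent_root i h0]
    · rcases lt_trichotomy (T.parent i) (T'.parent i) with h | h | h
      · exact absurd h (key T T' hd i hpos)
      · exact h
      · exact absurd h (key T' T (fun j => (hd j).symm) i hpos)
  cases T with
  | mk p a b c =>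
    cases T' with
    | mk p' a' b' c' =>
      simp only at hp
      subst hp
      rfl
end
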